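/- Given a g-invariant probability measure μ on 𝕋² (with g = fⁿₓ for a σ-periodic point x of period n), the measure m = (1/n) Σ_{i=0}^{n-1} δ_{σⁱ(x)} × (fⁱₓ)_*(μ) is F-invariant, projects onto the uniform measure on the σ-orbit of x, and satisfies ∫ ρ₁ dm = (1/n) ∫ ρₙ(x,·) dμ. -/

import Mathlib

open Filter MeasureTheory Topology Set

noncomputable section

instance : Fact ((0:ℝ) < 1) := ⟨one_pos⟩

/-- The two-torus `ℝ²/ℤ²`. -/
abbrev T2 := AddCircle (1:ℝ) × AddCircle (1:ℝ)

/-- The covering projection `π : ℝ² → 𝕋²`. -/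
def pr : ℝ × ℝ → T2 := fun p => (↑p.1, ↑p.2)

/-- An integer vector viewed inside `ℝ²`. -/
def intVec (v : ℤ × ℤ) : ℝ × ℝ := ((v.1 : ℝ), (v.2 : ℝ))

variable {Sg : Type*}

/-- The cocycle map `F(x,p) = (σ(x), fₓ(p))` on `M = Σ × 𝕋²`. -/
def coc (σ : Sg → Sg) (f : Sg → T2 → T2) : Sg × T2 → Sg × T2 :=
  fun q => (σ q.1, f q.1 q.2)

/-- Time-`n` averaged displacement `ρₙ = (1/n) Σ_{i<n} ρ₁ ∘ Fⁱ`. -/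
def rhoN (Fm : Sg × T2 → Sg × T2) (ρ1 : Sg × T2 → ℝ × ℝ) (n : ℕ) (q : Sg × T2) :
    ℝ × ℝ :=
  (n : ℝ)⁻¹ • ∑ i ∈ Finset.range n, ρ1 (Fm^[i] q)

/-- The pointwise rotation set `ρ_point`: all accumulation points of the
sequences `(ρₙ(x,p))ₙ`, over all points `(x,p) ∈ M`. -/
def rhoPointSet (Fm : Sg × T2 → Sg × T2) (ρ1 : Sg × T2 → ℝ × ℝ) : Set (ℝ × ℝ) :=
  {v | ∃ q : Sg × T2, MapClusterPt v atTop fun n => rhoN Fm ρ1 n q}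

/-- The Misiurewicz–Ziemian rotation set `ρ_mz = ⋂_N closure (⋃_{n ≥ N} Dₙ)`. -/
def rhoMZ (Fm : Sg × T2 → Sg × T2) (ρ1 : Sg × T2 → ℝ × ℝ) : Set (ℝ × ℝ) :=
  ⋂ N : ℕ, closure (⋃ n ∈ {n : ℕ | N ≤ n}, Set.range (rhoN Fm ρ1 n))

/-- The measure rotation set `ρ_mes = {∫ ρ₁ dm : m F-invariant probability}`. -/
def rhoMes [MeasurableSpace Sg] (Fm : Sg × T2 → Sg × T2) (ρ1 : Sg × T2 → ℝ × ℝ) :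
    Set (ℝ × ℝ) :=
  {v | ∃ m : Measure (Sg × T2), IsProbabilityMeasure m ∧ m.map Fm = m ∧
    (∫ q, ρ1 q ∂m) = v}

/-- The torus cocycle iteration `fⁿₓ = f_{σ^{n-1}x} ∘ ⋯ ∘ fₓ`. -/
def torIter (σ : Sg → Sg) (f : Sg → T2 → T2) : ℕ → Sg → T2 → T2
  | 0, _, p => p
  | n + 1, x, p => f (σ^[n] x) (torIter σ f n x p)

/-- The total (unnormalized) displacement over `n` steps of the cocycle,
`f̃ⁿₓ(q̃) − q̃ = Σ_{i<n} ρ₁(Fⁱ(x,q))`, as a function of `q ∈ 𝕋²`. -/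
def totalDisp (σ : Sg → Sg) (f : Sg → T2 → T2) (ρ1 : Sg × T2 → ℝ × ℝ)
    (n : ℕ) (x : Sg) (q : T2) : ℝ × ℝ :=
  ∑ i ∈ Finset.range n, ρ1 ((coc σ f)^[i] (x, q))

/-- The classical Misiurewicz–Ziemian rotation set of the lift `g̃ = f̃ⁿₓ`,
expressed through `g`-invariant measures: `ρ(g̃) = {∫ (g̃(q̃)−q̃) dμ}`. -/
def rotSetOfIterate [MeasurableSpace Sg] (σ : Sg → Sg) (f : Sg → T2 → T2)
    (ρ1 : Sg × T2 → ℝ × ℝ) (n : ℕ) (x : Sg) : Set (ℝ × ℝ) :=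
  {w | ∃ μ : Measure T2, IsProbabilityMeasure μ ∧
    μ.map (torIter σ f n x) = μ ∧ (∫ q, totalDisp σ f ρ1 n x q ∂μ) = w}

/-- The uniform (equidistributed) `σ`-invariant measure on the periodic orbit
of a `σ`-periodic point `x` of period `n`. -/
def orbitMeasure [MeasurableSpace Sg] (σ : Sg → Sg) (n : ℕ) (x : Sg) : Measure Sg :=
  (n : ENNReal)⁻¹ • ∑ i ∈ Finset.range n, Measure.dirac (σ^[i] x)

/-- The set of rotation vectors of `F`-invariant measures projecting to the
uniform measure on the `σ`-orbit of `x` (the periodic-word rotation set at `x`). -/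
def perWordRotSet [MeasurableSpace Sg] (σ : Sg → Sg) (f : Sg → T2 → T2)
    (ρ1 : Sg × T2 → ℝ × ℝ) (n : ℕ) (x : Sg) : Set (ℝ × ℝ) :=
  {w | ∃ m : Measure (Sg × T2), IsProbabilityMeasure m ∧
    m.map (coc σ f) = m ∧ m.map Prod.fst = orbitMeasure σ n x ∧
    (∫ q, ρ1 q ∂m) = w}


/-!
The measure `m` is the orbit average of the fibre measures `mᵢ = δ_{σⁱx} × (fⁱₓ)_*μ`. Each `mᵢ` is
the push-forward of `μ` under `q ↦ Fⁱ(x, q)`, so `F_* mᵢ = mᵢ₊₁`, and `σⁿx = x` together with the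
`fⁿₓ`-invariance of `μ` closes the cycle: `mₙ = m₀`. Hence `F` permutes the summands cyclically
and fixes their average. The same description of `mᵢ` turns `∫ ρ₁ dmᵢ` into
`∫ ρ₁(Fⁱ(x, q)) dμ(q)`, and summing over `i < n` gives the total displacement `f̃ⁿₓ(q̃) − q̃`.
-/

open scoped ENNReal

theorem Finset.sum_range_succ_eq_sum_range_of_eq {M : Type*} [AddCommMonoid M] {T : ℕ → M}
    {n : ℕ} (h : T n = T 0) : ∑ i ∈ range n, T (i + 1) = ∑ i ∈ range n, T i := by
  cases n with
  | zero => simp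
  | succ m => rw [sum_range_succ, h, ← sum_range_succ']

namespace MeasureTheory.Measure

variable {α : Type*} [MeasurableSpace α]

theorem map_smul_sum_range_eq_self {F : α → α} (hF : Measurable F) {T : ℕ → Measure α} {n : ℕ}
    (hstep : ∀ i, (T i).map F = T (i + 1)) (hper : T n = T 0) (c : ℝ≥0∞) :
    (c • ∑ i ∈ Finset.range n, T i).map F = c • ∑ i ∈ Finset.range n, T i := by
  rw [Measure.map_smul, map_finset_sum hF.aemeasurable, Finset.sum_congr rfl fun i _ => hstep i,
    Finset.sum_range_succ_eq_sum_range_of_eq hper]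

theorem isProbabilityMeasure_inv_smul_sum_range {T : ℕ → Measure α} {n : ℕ} (hn : n ≠ 0)
    (hT : ∀ i < n, IsProbabilityMeasure (T i)) :
    IsProbabilityMeasure ((n : ℝ≥0∞)⁻¹ • ∑ i ∈ Finset.range n, T i) := by
  constructor
  have hunit : ∀ i ∈ Finset.range n, T i univ = 1 := fun i hi =>
    (hT i (Finset.mem_range.1 hi)).measure_univ
  rw [smul_apply, finsetSum_apply, Finset.sum_congr rfl hunit, Finset.sum_const,
    Finset.card_range, nsmul_one, smul_eq_mul,
    ENNReal.inv_mul_cancel (Nat.cast_ne_zero.2 hn) (ENNReal.natCast_ne_top n)]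

theorem map_fst_smul_sum_dirac_prod {β ι : Type*} [MeasurableSpace β] (s : Finset ι) (a : ι → α)
    {ν : ι → Measure β} (hν : ∀ i ∈ s, IsProbabilityMeasure (ν i)) (c : ℝ≥0∞) :
    (c • ∑ i ∈ s, (dirac (a i)).prod (ν i)).map Prod.fst = c • ∑ i ∈ s, dirac (a i) := by
  rw [Measure.map_smul, map_finset_sum measurable_fst.aemeasurable]
  refine congrArg _ (Finset.sum_congr rfl fun i hi => ?_)
  have := hν i hi
  rw [map_fst_prod, measure_univ, one_smul]

end MeasureTheory.Measure

theorem coc_iterate_mk (σ : Sg → Sg) (f : Sg → T2 → T2) (i : ℕ) (x : Sg) (q : T2) :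
    (coc σ f)^[i] (x, q) = (σ^[i] x, torIter σ f i x q) := by
  induction i with
  | zero => rfl
  | succ k ih => rw [Function.iterate_succ_apply', ih, Function.iterate_succ_apply']; rfl

section Cocycle

variable [TopologicalSpace Sg] {σ : Sg → Sg} {f : Sg → T2 → T2}

theorem continuous_coc (hσ : Continuous σ) (hf : Continuous fun q : Sg × T2 => f q.1 q.2) :
    Continuous (coc σ f) :=
  (hσ.comp continuous_fst).prodMk hf

theorem continuous_torIter (hf : Continuous fun q : Sg × T2 => f q.1 q.2) (i : ℕ) (x : Sg) :
    Continuous (torIter σ f i x) := by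
  induction i with
  | zero => exact continuous_id
  | succ k ih => exact (hf.comp (continuous_const.prodMk continuous_id)).comp ih

theorem continuous_coc_iterate_mk (hF : Continuous (coc σ f)) (i : ℕ) (x : Sg) :
    Continuous fun q : T2 => (coc σ f)^[i] (x, q) :=
  (hF.iterate i).comp (continuous_const.prodMk continuous_id)

variable [MeasurableSpace Sg] (μ : Measure T2)

theorem dirac_prod_map_torIter [SFinite μ] (hf : Continuous fun q : Sg × T2 => f q.1 q.2)
    (i : ℕ) (x : Sg) :
    (Measure.dirac (σ^[i] x)).prod (μ.map (torIter σ f i x)) =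
      μ.map fun q => (coc σ f)^[i] (x, q) := by
  rw [Measure.dirac_prod, Measure.map_map measurable_prodMk_left
    (continuous_torIter hf i x).measurable]
  simp only [Function.comp_def, coc_iterate_mk]

theorem map_coc_iterate_mk_of_periodic [SFinite μ] (hf : Continuous fun q : Sg × T2 => f q.1 q.2)
    {n : ℕ} {x : Sg} (hper : σ^[n] x = x) (hμinv : μ.map (torIter σ f n x) = μ) :
    μ.map (fun q => (coc σ f)^[n] (x, q)) = μ.map fun q => (coc σ f)^[0] (x, q) := by
  rw [← dirac_prod_map_torIter μ hf, ← dirac_prod_map_torIter μ hf, hper, hμinv]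
  exact congrArg _ Measure.map_id'.symm

variable [BorelSpace Sg]

theorem map_coc_map_coc_iterate_mk (hF : Continuous (coc σ f)) (i : ℕ) (x : Sg) :
    (μ.map fun q => (coc σ f)^[i] (x, q)).map (coc σ f) =
      μ.map fun q => (coc σ f)^[i + 1] (x, q) := by
  rw [Measure.map_map hF.measurable (continuous_coc_iterate_mk hF i x).measurable]
  simp only [Function.comp_def, ← Function.iterate_succ_apply' (coc σ f)]

variable [IsFiniteMeasure μ] {ρ1 : Sg × T2 → ℝ × ℝ}

theorem integrable_map_coc_iterate (hρ : Continuous ρ1) (hF : Continuous (coc σ f)) (i : ℕ)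
    (x : Sg) :
    Integrable ρ1 (μ.map fun q => (coc σ f)^[i] (x, q)) := by
  have hg := continuous_coc_iterate_mk hF i x
  exact (integrable_map_measure hρ.aestronglyMeasurable hg.aemeasurable).2 <|
    (hρ.comp hg).integrable_of_hasCompactSupport (HasCompactSupport.of_compactSpace _)

theorem integral_totalDisp (hρ : Continuous ρ1) (hF : Continuous (coc σ f)) (n : ℕ) (x : Sg) :
    ∫ q, totalDisp σ f ρ1 n x q ∂μ =
      ∑ i ∈ Finset.range n, ∫ p, ρ1 p ∂(μ.map fun q => (coc σ f)^[i] (x, q)) := by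
  have hg := fun i => continuous_coc_iterate_mk hF i x
  simp only [totalDisp]
  rw [integral_finsetSum]
  · exact Finset.sum_congr rfl fun i _ =>
      (integral_map (hg i).aemeasurable hρ.aestronglyMeasurable).symm
  · exact fun i _ => (integrable_map_measure hρ.aestronglyMeasurable (hg i).aemeasurable).1
      (integrable_map_coc_iterate μ hρ hF i x)

end Cocycle

theorem explicit_periodic_orbit_measure_general
    [TopologicalSpace Sg] [MeasurableSpace Sg] [BorelSpace Sg]
    (σ : Sg → Sg) (hσ : Continuous σ)
    (f : Sg → T2 → T2) (hf : Continuous fun q : Sg × T2 => f q.1 q.2)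
    (ρ1 : Sg × T2 → ℝ × ℝ) (hρc : Continuous ρ1)
    (x : Sg) (n : ℕ) (hn : 0 < n) (hper : σ^[n] x = x)
    (μ : Measure T2) (hμ : IsProbabilityMeasure μ)
    (hμinv : μ.map (torIter σ f n x) = μ) :
    IsProbabilityMeasure
        ((n : ENNReal)⁻¹ • ∑ i ∈ Finset.range n,
          (Measure.dirac (σ^[i] x)).prod (μ.map (torIter σ f i x))) ∧
      ((n : ENNReal)⁻¹ • ∑ i ∈ Finset.range n,
          (Measure.dirac (σ^[i] x)).prod (μ.map (torIter σ f i x))).map (coc σ f) =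
        ((n : ENNReal)⁻¹ • ∑ i ∈ Finset.range n,
          (Measure.dirac (σ^[i] x)).prod (μ.map (torIter σ f i x))) ∧
      ((n : ENNReal)⁻¹ • ∑ i ∈ Finset.range n,
          (Measure.dirac (σ^[i] x)).prod (μ.map (torIter σ f i x))).map Prod.fst =
        orbitMeasure σ n x ∧
      (∫ q, ρ1 q
          ∂((n : ENNReal)⁻¹ • ∑ i ∈ Finset.range n,
            (Measure.dirac (σ^[i] x)).prod (μ.map (torIter σ f i x)))) =
        (n : ℝ)⁻¹ • ∫ q, totalDisp σ f ρ1 n x q ∂μ := by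
  have hF := continuous_coc hσ hf
  have hproj := Measure.map_fst_smul_sum_dirac_prod (Finset.range n) (σ^[·] x)
    (ν := fun i => μ.map (torIter σ f i x))
    (fun i _ => Measure.isProbabilityMeasure_map (continuous_torIter hf i x).aemeasurable)
    (n : ℝ≥0∞)⁻¹
  simp only [dirac_prod_map_torIter μ hf] at hproj ⊢
  refine ⟨Measure.isProbabilityMeasure_inv_smul_sum_range hn.ne' fun i _ =>
      Measure.isProbabilityMeasure_map (continuous_coc_iterate_mk hF i x).aemeasurable,
    Measure.map_smul_sum_range_eq_self hF.measurable (map_coc_map_coc_iterate_mk μ hF · x)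
      (map_coc_iterate_mk_of_periodic μ hf hper hμinv) _, hproj, ?_⟩
  rw [integral_smul_measure, integral_finsetSum_measure fun i _ =>
      integrable_map_coc_iterate μ hρc hF i x, integral_totalDisp μ hρc hF n x,
    ENNReal.toReal_inv, ENNReal.toReal_natCast]

/-- for `x` a `σ`-periodic point of period `n`, `g = fⁿₓ` and a
`g`-invariant probability measure `μ` on `𝕋²`, the measure
`m = (1/n) Σ_{i<n} δ_{σⁱ(x)} × (fⁱₓ)_*(μ)` is `F`-invariant, projects onto the
uniform measure on the `σ`-orbit of `x`, and `∫ ρ₁ dm = (1/n) ∫ ρₙ(x,·) dμ`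
(with `ρₙ(x,q) = f̃ⁿₓ(q̃) − q̃` the total `n`-step displacement). -/
theorem explicit_periodic_orbit_measure
    [TopologicalSpace Sg] [CompactSpace Sg] [MeasurableSpace Sg] [BorelSpace Sg]
    (σ : Sg → Sg) (hσ : Continuous σ)
    (f : Sg → T2 → T2) (hf : Continuous fun q : Sg × T2 => f q.1 q.2)
    (ft : Sg → (ℝ × ℝ) → (ℝ × ℝ))
    (hftc : Continuous fun q : Sg × (ℝ × ℝ) => ft q.1 q.2)
    (hlift : ∀ x p, pr (ft x p) = f x (pr p))
    (ρ1 : Sg × T2 → ℝ × ℝ) (hρc : Continuous ρ1)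
    (hρ : ∀ x p, ρ1 (x, pr p) = ft x p - p)
    (x : Sg) (n : ℕ) (hn : 0 < n) (hper : σ^[n] x = x)
    (μ : Measure T2) (hμ : IsProbabilityMeasure μ)
    (hμinv : μ.map (torIter σ f n x) = μ) :
    IsProbabilityMeasure
        ((n : ENNReal)⁻¹ • ∑ i ∈ Finset.range n,
          (Measure.dirac (σ^[i] x)).prod (μ.map (torIter σ f i x))) ∧
      ((n : ENNReal)⁻¹ • ∑ i ∈ Finset.range n,
          (Measure.dirac (σ^[i] x)).prod (μ.map (torIter σ f i x))).map (coc σ f) =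
        ((n : ENNReal)⁻¹ • ∑ i ∈ Finset.range n,
          (Measure.dirac (σ^[i] x)).prod (μ.map (torIter σ f i x))) ∧
      ((n : ENNReal)⁻¹ • ∑ i ∈ Finset.range n,
          (Measure.dirac (σ^[i] x)).prod (μ.map (torIter σ f i x))).map Prod.fst =
        orbitMeasure σ n x ∧
      (∫ q, ρ1 q
          ∂((n : ENNReal)⁻¹ • ∑ i ∈ Finset.range n,
            (Measure.dirac (σ^[i] x)).prod (μ.map (torIter σ f i x)))) =
        (n : ℝ)⁻¹ • ∫ q, totalDisp σ f ρ1 n x q ∂μ :=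
  explicit_periodic_orbit_measure_general σ hσ f hf ρ1 hρc x n hn hper μ hμ hμinv
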